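/- arXiv:1311.0937 — 9 statements merged into one kernel-verified Lean document; each statement's English description precedes it below -/
import Mathlib

section
/- Let x : ℕ → ℝ be a nonnegative nonincreasing sequence in c₀, and define (Sx)(k) = x(k) · (1 + (1/(k+1)) · log((∏_{m=0}^k x(m)) / x(k)^(k+1))) (interpreted as 0 when x(k)=0). Then Sx is nonincreasing, i.e., (Sx)(k+1) ≤ (Sx)(k) for all k. -/
/-!
Put `D = log (∏_{m ≤ k} x m) / (k + 1)` and `φ_a t = t (1 + a (D - log t))`. Then
`(Sx)(k) = φ_1 (x k)` and `(Sx)(k+1) = φ_a (x (k+1))` with `a = (k+1)/(k+2)`, and `log (x k) ≤ D`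
because `x` is nonincreasing. For `0 ≤ a ≤ 1` the map `φ_a` is nondecreasing on `(0, exp D]`,
and `φ_a ≤ φ_1` wherever `log t ≤ D`; chaining these two facts gives the claim.
-/

/-- The operator `S`, with `(Sx)(k) = x(k)(1 + (1/(k+1)) log(∏_{m=0}^k x(m) / x(k)^(k+1)))`,
interpreted as `0` when `x(k) = 0`. -/
noncomputable def opS (x : ℕ → ℝ) (k : ℕ) : ℝ :=
  if x k = 0 then 0 else
    x k * (1 + (1 / ((k : ℝ) + 1)) *
      Real.log ((∏ m ∈ Finset.range (k + 1), x m) / x k ^ (k + 1)))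

open Finset Real

lemma mul_sub_log_le_sub {t s : ℝ} (ht : 0 < t) (hs : 0 < s) :
    t * (log s - log t) ≤ s - t := by
  have h := log_le_sub_one_of_pos (div_pos hs ht)
  rw [log_div hs.ne' ht.ne'] at h
  calc t * (log s - log t) ≤ t * (s / t - 1) := mul_le_mul_of_nonneg_left h ht.le
    _ = s - t := by field_simp

lemma mul_one_add_mul_sub_log_le_of_le {a D t s : ℝ} (ha0 : 0 ≤ a) (ha1 : a ≤ 1)
    (ht : 0 < t) (hts : t ≤ s) (hsD : log s ≤ D) :
    t * (1 + a * (D - log t)) ≤ s * (1 + a * (D - log s)) := by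
  have hlog := mul_le_mul_of_nonneg_left (mul_sub_log_le_sub ht (ht.trans_le hts)) ha0
  -- the difference of the two sides is `(s - t)(1 + a (D - log s)) - a t (log s - log t)`
  have hslope : 0 ≤ (s - t) * ((1 - a) + a * (D - log s)) := by
    apply mul_nonneg <;> nlinarith
  nlinarith

section Antitone

variable {x : ℕ → ℝ} {k : ℕ}

lemma pow_le_prod_range_of_antitone (hmono : Antitone x) (hk : 0 ≤ x k) :
    x k ^ (k + 1) ≤ ∏ m ∈ range (k + 1), x m := by
  calc x k ^ (k + 1) = ∏ _m ∈ range (k + 1), x k := by rw [prod_const, card_range]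
    _ ≤ ∏ m ∈ range (k + 1), x m :=
      prod_le_prod (fun _ _ => hk) fun _ hm => hmono (Nat.lt_succ_iff.mp (mem_range.mp hm))

lemma prod_range_pos_of_antitone (hmono : Antitone x) (hk : 0 < x k) :
    0 < ∏ m ∈ range (k + 1), x m :=
  prod_pos fun _ hm => hk.trans_le (hmono (Nat.lt_succ_iff.mp (mem_range.mp hm)))

lemma log_le_log_prod_range_div_of_antitone (hmono : Antitone x) (hk : 0 < x k) :
    log (x k) ≤ log (∏ m ∈ range (k + 1), x m) / (k + 1) := by
  rw [le_div_iff₀ (by positivity), mul_comm, ← Nat.cast_succ, ← log_pow]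
  exact log_le_log (by positivity) (pow_le_prod_range_of_antitone hmono hk.le)

lemma opS_nonneg (hmono : Antitone x) (hk : 0 ≤ x k) : 0 ≤ opS x k := by
  unfold opS
  split_ifs with h0
  · exact le_rfl
  have hk' : 0 < x k := hk.lt_of_ne' h0
  have hlog : 0 ≤ log ((∏ m ∈ range (k + 1), x m) / x k ^ (k + 1)) :=
    log_nonneg ((one_le_div (by positivity)).mpr (pow_le_prod_range_of_antitone hmono hk))
  positivity

lemma opS_eq_of_pos (hmono : Antitone x) (hk : 0 < x k) :
    opS x k = x k * (1 + (log (∏ m ∈ range (k + 1), x m) / (k + 1) - log (x k))) := by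
  rw [opS, if_neg hk.ne', log_div (prod_range_pos_of_antitone hmono hk).ne' (by positivity),
    log_pow]
  push_cast
  field_simp

end Antitone

theorem stmt_1_general (x : ℕ → ℝ) (hpos : ∀ k, 0 ≤ x k) (hmono : Antitone x) :
    ∀ k, opS x (k + 1) ≤ opS x k := by
  intro k
  rcases (hpos (k + 1)).eq_or_lt with hzero | hsucc
  · rw [opS, if_pos hzero.symm]
    exact opS_nonneg hmono (hpos k)
  have hts : x (k + 1) ≤ x k := hmono k.le_succ
  have hk : 0 < x k := hsucc.trans_le hts
  set D := log (∏ m ∈ range (k + 1), x m) / (k + 1)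
  set a : ℝ := (k + 1) / (k + 2)
  have hkD : log (x k) ≤ D := log_le_log_prod_range_div_of_antitone hmono hk
  have ha1 : a ≤ 1 := div_le_one_of_le₀ (by linarith) (by positivity)
  have hsucc_eq : opS x (k + 1) = x (k + 1) * (1 + a * (D - log (x (k + 1)))) := by
    rw [opS_eq_of_pos hmono hsucc, prod_range_succ,
      log_mul (prod_range_pos_of_antitone hmono hk).ne' hsucc.ne']
    simp only [D, a]
    push_cast
    field_simp
    ring
  calc opS x (k + 1) = x (k + 1) * (1 + a * (D - log (x (k + 1)))) := hsucc_eq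
    _ ≤ x k * (1 + a * (D - log (x k))) :=
      mul_one_add_mul_sub_log_le_of_le (by positivity) ha1 hsucc hts hkD
    _ ≤ x k * (1 + (D - log (x k))) := by
      gcongr
      exact mul_le_of_le_one_left (sub_nonneg.mpr hkD) ha1
    _ = opS x k := (opS_eq_of_pos hmono hk).symm

/-- If `x` is a nonnegative nonincreasing null sequence, then `Sx` is nonincreasing. -/
theorem stmt_1 (x : ℕ → ℝ) (hpos : ∀ k, 0 ≤ x k) (hmono : Antitone x)
    (hnull : Filter.Tendsto x Filter.atTop (nhds 0)) :
    ∀ k, opS x (k + 1) ≤ opS x k :=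
  stmt_1_general x hpos hmono
end

section
/- Let x : ℕ → ℝ be a nonnegative nonincreasing sequence with x(m) > 0 for m ≤ k, and define (Sx)(k) = x(k)(1 + (1/(k+1)) log(∏_{m=0}^k x(m) / x(k)^(k+1))). Then for every n ≥ 0 and every k ≥ n, (Sx)(k) ≤ x(n)(1 + (1/(k+1)) log(∏_{m=0}^n x(m) / x(n)^(n+1))). -/
/-!
Write `L j = log (∏_{m ≤ j} x m / x j ^ (j + 1))`, so that `(Sx)(k) = x k (1 + L k / (k + 1))`.
Passing from `j` to `j + 1` adds `(j + 1) log (x j / x (j + 1))` to `L`, and by `log t ≤ t - 1`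
the weight `x (j + 1)` times this increment is at most `(j + 1) (x j - x (j + 1))`. With the
factor `c = 1 / (k + 1)` this gain is at most the loss `x j - x (j + 1)`, so
`j ↦ x j (1 + c L j)` is antitone on `[0, k]`; compare its values at `n` and `k`.
-/

open Finset Real

lemma mul_log_div_le_sub {a b : ℝ} (ha : 0 < a) (hb : 0 < b) : b * log (a / b) ≤ a - b :=
  calc b * log (a / b) ≤ b * (a / b - 1) :=
        mul_le_mul_of_nonneg_left (log_le_sub_one_of_pos (div_pos ha hb)) hb.le
    _ = a - b := by field_simp

lemma mul_one_add_mul_add_mul_log_le {a b c t L : ℝ} (hb : 0 < b) (hba : b ≤ a) (hc : 0 ≤ c)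
    (ht : 0 ≤ t) (hct : c * t ≤ 1) (hL : 0 ≤ L) :
    b * (1 + c * (L + t * log (a / b))) ≤ a * (1 + c * L) := by
  have hgain : c * t * (b * log (a / b)) ≤ a - b :=
    calc c * t * (b * log (a / b)) ≤ c * t * (a - b) :=
          mul_le_mul_of_nonneg_left (mul_log_div_le_sub (hb.trans_le hba) hb) (by positivity)
      _ ≤ a - b := mul_le_of_le_one_left (sub_nonneg.2 hba) hct
  have hloss : b * (c * L) ≤ a * (c * L) := mul_le_mul_of_nonneg_right hba (by positivity)
  linarith

noncomputable def logProdRatio (x : ℕ → ℝ) (n : ℕ) : ℝ :=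
  log ((∏ m ∈ range (n + 1), x m) / x n ^ (n + 1))

lemma logProdRatio_nonneg {x : ℕ → ℝ} (hx : Antitone x) {n : ℕ} (hxn : 0 < x n) :
    0 ≤ logProdRatio x n := by
  refine log_nonneg ((one_le_div (by positivity)).2 ?_)
  calc x n ^ (n + 1) = ∏ _m ∈ range (n + 1), x n := by rw [prod_const, card_range]
    _ ≤ ∏ m ∈ range (n + 1), x m :=
        prod_le_prod (fun _ _ => hxn.le) fun _ hm => hx (Nat.lt_succ_iff.1 (mem_range.1 hm))

lemma prod_div_pow_succ (x : ℕ → ℝ) {j : ℕ} (hxj : x j ≠ 0) (hxj' : x (j + 1) ≠ 0) :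
    (∏ m ∈ range (j + 2), x m) / x (j + 1) ^ (j + 2) =
      (∏ m ∈ range (j + 1), x m) / x j ^ (j + 1) * (x j / x (j + 1)) ^ (j + 1) := by
  rw [prod_range_succ, div_pow, pow_succ (x (j + 1)) (j + 1)]
  field_simp

lemma logProdRatio_succ {x : ℕ → ℝ} {j : ℕ} (hx : ∀ m ≤ j + 1, 0 < x m) :
    logProdRatio x (j + 1) = logProdRatio x j + (j + 1) * log (x j / x (j + 1)) := by
  have hprod : ∏ m ∈ range (j + 1), x m ≠ 0 :=
    prod_ne_zero_iff.2 fun m hm => (hx m (by simp at hm; omega)).ne'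
  have hxj : x j ≠ 0 := (hx j j.le_succ).ne'
  have hxj' : x (j + 1) ≠ 0 := (hx (j + 1) le_rfl).ne'
  rw [logProdRatio, logProdRatio, prod_div_pow_succ x hxj hxj',
    log_mul (by positivity) (by positivity), log_pow]
  push_cast
  ring

lemma antitoneOn_mul_one_add_mul_logProdRatio {x : ℕ → ℝ} (hx : Antitone x) {k : ℕ}
    (hxk : ∀ m ≤ k, 0 < x m) {c : ℝ} (hc : 0 ≤ c) (hck : c * k ≤ 1) :
    AntitoneOn (fun j => x j * (1 + c * logProdRatio x j)) (Set.Iic k) := by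
  refine antitoneOn_of_succ_le Set.ordConnected_Iic fun j _ _ hj => ?_
  rw [Order.succ_eq_add_one, Set.mem_Iic] at hj
  have hct : c * ((j : ℝ) + 1) ≤ 1 :=
    (mul_le_mul_of_nonneg_left (by exact_mod_cast hj) hc).trans hck
  simp only [Order.succ_eq_add_one]
  rw [logProdRatio_succ fun m hm => hxk m (hm.trans hj)]
  exact mul_one_add_mul_add_mul_log_le (hxk _ hj) (hx j.le_succ) hc (by positivity) hct
    (logProdRatio_nonneg hx (hxk j (by omega)))

theorem stmt_2_general (x : ℕ → ℝ) (hmono : Antitone x) :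
    ∀ n k : ℕ, n ≤ k → (∀ m ≤ k, 0 < x m) →
      opS x k ≤ x n * (1 + (1 / ((k : ℝ) + 1)) *
        Real.log ((∏ m ∈ Finset.range (n + 1), x m) / x n ^ (n + 1))) := by
  intro n k hnk hxk
  have hck : 1 / ((k : ℝ) + 1) * k ≤ 1 := by
    rw [one_div_mul_eq_div, div_le_one (by positivity)]
    linarith
  rw [opS, if_neg (hxk k le_rfl).ne']
  exact antitoneOn_mul_one_add_mul_logProdRatio hmono hxk (by positivity) hck
    (Set.mem_Iic.2 hnk) Set.self_mem_Iic hnk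

/-- For a nonnegative nonincreasing sequence `x`, strictly positive up to `k`,
and `n ≤ k`, one has `(Sx)(k) ≤ x(n)(1 + (1/(k+1)) log(∏_{m=0}^n x(m)/x(n)^(n+1)))`. -/
theorem stmt_2 (x : ℕ → ℝ) (hpos : ∀ m, 0 ≤ x m) (hmono : Antitone x) :
    ∀ n k : ℕ, n ≤ k → (∀ m ≤ k, 0 < x m) →
      opS x k ≤ x n * (1 + (1 / ((k : ℝ) + 1)) *
        Real.log ((∏ m ∈ Finset.range (n + 1), x m) / x n ^ (n + 1))) :=
  stmt_2_general x hmono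
end

section
/- Let x : ℕ → ℝ be a nonnegative nonincreasing sequence with x(m) > 0 for m ≤ n, and define (Sx)(k) = x(k)(1 + (1/(k+1)) log(∏_{m=0}^k x(m) / x(k)^(k+1))). Then for every n ≥ 0 and every k ≤ n, (Sx)(k) ≤ x(k)(1 + (1/(k+1)) log(∏_{m=0}^n x(m) / x(n)^(n+1))). -/
open Finset

section ProdRatio

variable {K : Type*} [Field K] [LinearOrder K] [IsStrictOrderedRing K] {x : ℕ → K} {k n : ℕ}

def prodRatio (x : ℕ → K) (k : ℕ) : K :=
  (∏ m ∈ range (k + 1), x m) / x k ^ (k + 1)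

theorem prod_range_succ_pos_of_antitone (hx : Antitone x) (hk : 0 < x k) :
    0 < ∏ m ∈ range (k + 1), x m :=
  prod_pos fun _ hm => hk.trans_le (hx (Nat.lt_succ_iff.mp (mem_range.mp hm)))

theorem prodRatio_pos (hx : Antitone x) (hk : 0 < x k) : 0 < prodRatio x k :=
  div_pos (prod_range_succ_pos_of_antitone hx hk) (pow_pos hk _)

theorem prodRatio_le_succ (hx : Antitone x) (hk : 0 < x (k + 1)) :
    prodRatio x k ≤ prodRatio x (k + 1) := by
  have hP := prod_range_succ_pos_of_antitone hx (hk.trans_le (hx k.le_succ))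
  have hsucc : prodRatio x (k + 1) = (∏ m ∈ range (k + 1), x m) / x (k + 1) ^ (k + 1) := by
    rw [prodRatio, prod_range_succ, pow_succ, mul_div_mul_right _ _ hk.ne']
  rw [hsucc, prodRatio]
  exact div_le_div_of_nonneg_left hP.le (pow_pos hk _)
    (pow_le_pow_left₀ hk.le (hx k.le_succ) _)

theorem prodRatio_le_of_le (hx : Antitone x) (hn : 0 < x n) (hkn : k ≤ n) :
    prodRatio x k ≤ prodRatio x n := by
  induction n, hkn using Nat.le_induction with
  | base => rfl
  | succ n hkn ih =>
    exact (ih (hn.trans_le (hx n.le_succ))).trans (prodRatio_le_succ hx hn)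

end ProdRatio

theorem stmt_3_general (x : ℕ → ℝ) (hmono : Antitone x) :
    ∀ n k : ℕ, k ≤ n → (∀ m ≤ n, 0 < x m) →
      opS x k ≤ x k * (1 + (1 / ((k : ℝ) + 1)) *
        Real.log ((∏ m ∈ Finset.range (n + 1), x m) / x n ^ (n + 1))) := by
  intro n k hkn hpos
  have hk := hpos k hkn
  have hlog : Real.log (prodRatio x k) ≤ Real.log (prodRatio x n) :=
    Real.log_le_log (prodRatio_pos hmono hk) (prodRatio_le_of_le hmono (hpos n le_rfl) hkn)
  rw [opS, if_neg hk.ne']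
  gcongr x k * (1 + _ * ?_)
  exact hlog

/-- For a nonnegative nonincreasing sequence `x`, strictly positive up to `n`,
and `k ≤ n`, one has `(Sx)(k) ≤ x(k)(1 + (1/(k+1)) log(∏_{m=0}^n x(m)/x(n)^(n+1)))`. -/
theorem stmt_3 (x : ℕ → ℝ) (hpos : ∀ m, 0 ≤ x m) (hmono : Antitone x) :
    ∀ n k : ℕ, k ≤ n → (∀ m ≤ n, 0 < x m) →
      opS x k ≤ x k * (1 + (1 / ((k : ℝ) + 1)) *
        Real.log ((∏ m ∈ Finset.range (n + 1), x m) / x n ^ (n + 1))) :=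
  stmt_3_general x hmono
end

section
/- Let x : ℕ → ℝ be a positive nonincreasing sequence and define (Sx)(k) = x(k)(1 + (1/(k+1)) log(∏_{m=0}^k x(m) / x(k)^(k+1))). Let x⊕x denote the sequence with (x⊕x)(2j) = (x⊕x)(2j+1) = x(j). Then for every n ≥ 0, ∏_{k=0}^n (Sx)(k) ≤ 4^(n+1) ∏_{k=0}^n (x⊕x)(k); i.e., Sx is logarithmically submajorized by 4(x⊕x). -/
/-!
Put `s = log ∘ x`, which is antitone, and `e k = ∑_{m ≤ k} (s m - s k) ≥ 0`, so that
`(Sx)(k) = x(k) (1 + e k / (k+1))`. The tangent line of `log` at `n + 1` gives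
`log (1 + e k / (k+1)) ≤ log ((n+1)/(k+1)) + e k / (n+1)`, and `(n+1)^(n+1) / (n+1)! ≤ exp (n+1)`
then bounds `∑_{k ≤ n} log (1 + e k / (k+1))` by `(n+1) + ∑_{k ≤ n} e k / (n+1)`.
Expanded in the increments `s i - s (i+1) ≥ 0`, the sums `∑_{k ≤ n} e k` and
`∑_{k ≤ n} (s (k/2) - s k)` have coefficients `(i+1)(n-i)` and `min (i+1) (n-i)`, so the first is
at most `n + 1` times the second. Since `1 ≤ log 4`, exponentiating gives the claim.
-/

open Finset Real

noncomputable def excess (s : ℕ → ℝ) (k : ℕ) : ℝ :=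
  ∑ m ∈ range (k + 1), (s m - s k)

lemma sub_eq_sum_Ico_sub {M : Type*} [AddCommGroup M] (f : ℕ → M) {a b : ℕ} (h : a ≤ b) :
    f a - f b = ∑ i ∈ Ico a b, (f i - f (i + 1)) := by
  simpa only [sub_neg_eq_add, neg_add_eq_sub] using (sum_Ico_sub (fun i => -f i) h).symm

lemma sum_sum_Ico_eq_sum_card_nsmul {ι M : Type*} [AddCommMonoid M] (f : ℕ → M) (K : Finset ι)
    (a b : ι → ℕ) {N : ℕ} (hb : ∀ k ∈ K, b k ≤ N) :
    ∑ k ∈ K, ∑ i ∈ Ico (a k) (b k), f i = ∑ i ∈ range N, #{k ∈ K | a k ≤ i ∧ i < b k} • f i := by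
  rw [sum_comm' (t' := range N) (s' := fun i => {k ∈ K | a k ≤ i ∧ i < b k})]
  · simp only [sum_const]
  · intro k i
    simp only [mem_Ico, mem_range, mem_filter]
    exact ⟨fun ⟨hk, hi⟩ => ⟨⟨hk, hi⟩, hi.2.trans_le (hb k hk)⟩, fun ⟨hki, _⟩ => hki⟩

lemma excess_nonneg {s : ℕ → ℝ} (hs : Antitone s) (k : ℕ) : 0 ≤ excess s k :=
  sum_nonneg fun _ hm => sub_nonneg.2 (hs (Nat.lt_succ_iff.1 (mem_range.1 hm)))

lemma excess_eq_sum (s : ℕ → ℝ) (k : ℕ) :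
    excess s k = ∑ i ∈ range k, ((i : ℝ) + 1) * (s i - s (i + 1)) := by
  rw [excess, sum_congr rfl fun m hm => sub_eq_sum_Ico_sub s (Nat.lt_succ_iff.1 (mem_range.1 hm)),
    sum_sum_Ico_eq_sum_card_nsmul _ _ _ _ fun _ _ => le_rfl]
  refine sum_congr rfl fun i hi => ?_
  rw [show {m ∈ range (k + 1) | m ≤ i ∧ i < k} = range (i + 1) by
    ext m; simp only [mem_filter, mem_range] at hi ⊢; omega, card_range, nsmul_eq_mul]
  push_cast
  ring

lemma sum_excess_eq (s : ℕ → ℝ) (n : ℕ) :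
    ∑ k ∈ range (n + 1), excess s k
      = ∑ i ∈ range n, (((n - i) * (i + 1) : ℕ) : ℝ) * (s i - s (i + 1)) := by
  conv_lhs => simp only [excess_eq_sum, range_eq_Ico]
  rw [sum_sum_Ico_eq_sum_card_nsmul _ _ _ _ fun k hk => Nat.lt_succ_iff.1 (mem_Ico.1 hk).2]
  refine sum_congr rfl fun i _ => ?_
  rw [show {k ∈ Ico 0 (n + 1) | 0 ≤ i ∧ i < k} = Ioc i n by
    ext k; simp only [mem_filter, mem_Ico, mem_Ioc]; omega, Nat.card_Ioc, nsmul_eq_mul]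
  push_cast
  ring

lemma sum_sub_half_eq (s : ℕ → ℝ) (n : ℕ) :
    ∑ k ∈ range (n + 1), (s (k / 2) - s k)
      = ∑ i ∈ range n, ((min n (2 * i + 1) - i : ℕ) : ℝ) * (s i - s (i + 1)) := by
  rw [sum_congr rfl fun k _ => sub_eq_sum_Ico_sub s (Nat.div_le_self k 2),
    sum_sum_Ico_eq_sum_card_nsmul _ _ _ _ fun k hk => Nat.lt_succ_iff.1 (mem_range.1 hk)]
  refine sum_congr rfl fun i _ => ?_
  rw [show {k ∈ range (n + 1) | k / 2 ≤ i ∧ i < k} = Ioc i (min n (2 * i + 1)) by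
    ext k; simp only [mem_filter, mem_range, mem_Ioc]; omega, Nat.card_Ioc, nsmul_eq_mul]

lemma sum_excess_le {s : ℕ → ℝ} (hs : Antitone s) (n : ℕ) :
    ∑ k ∈ range (n + 1), excess s k ≤ (n + 1) * ∑ k ∈ range (n + 1), (s (k / 2) - s k) := by
  rw [sum_excess_eq, sum_sub_half_eq, mul_sum]
  refine sum_le_sum fun i hi => ?_
  have hin : i < n := mem_range.1 hi
  have hcount : (n - i) * (i + 1) ≤ (n + 1) * (min n (2 * i + 1) - i) := by
    rcases le_total n (2 * i + 1) with h | h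
    · rw [min_eq_left h, mul_comm]
      exact Nat.mul_le_mul_right _ (by omega)
    · rw [min_eq_right h]
      exact Nat.mul_le_mul (by omega) (by omega)
  rw [← mul_assoc]
  exact mul_le_mul_of_nonneg_right (by exact_mod_cast hcount) (sub_nonneg.2 (hs i.le_succ))


lemma log_one_add_div_le {a b e : ℝ} (ha : 0 < a) (hab : a ≤ b) (he : 0 ≤ e) :
    log (1 + e / a) ≤ log (b / a) + e / b := by
  have hb : 0 < b := ha.trans_le hab
  have hsplit : 1 + e / a = b / a * ((a + e) / b) := by field_simp
  rw [hsplit, log_mul (by positivity) (by positivity)]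
  have htangent := log_le_sub_one_of_pos (show 0 < (a + e) / b by positivity)
  have : (a + e) / b - 1 ≤ e / b := by
    rw [add_div]
    linarith [div_le_one_of_le₀ hab hb.le]
  linarith

lemma sum_log_div_le (n : ℕ) : ∑ k ∈ range n, log (n / (k + 1)) ≤ n := by
  rcases Nat.eq_zero_or_pos n with rfl | hn
  · simp
  have hn' : (0 : ℝ) < n := by exact_mod_cast hn
  have hfact : ∏ k ∈ range n, ((k : ℝ) + 1) = n.factorial := by
    exact_mod_cast prod_range_add_one_eq_factorial n
  rw [← log_prod fun k _ => by positivity, prod_div_distrib, prod_const, card_range, hfact]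
  calc log ((n : ℝ) ^ n / n.factorial) ≤ log (exp n) :=
        log_le_log (by positivity) (pow_div_factorial_le_exp _ n.cast_nonneg n)
    _ = n := log_exp n

lemma sum_log_one_add_div_le {e : ℕ → ℝ} (he : ∀ k, 0 ≤ e k) (n : ℕ) :
    ∑ k ∈ range n, log (1 + e k / (k + 1)) ≤ n + (∑ k ∈ range n, e k) / n := by
  calc ∑ k ∈ range n, log (1 + e k / (k + 1))
      ≤ ∑ k ∈ range n, (log (n / (k + 1)) + e k / n) := sum_le_sum fun k hk =>
        log_one_add_div_le (by positivity) (by exact_mod_cast mem_range.1 hk) (he k)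
    _ ≤ n + (∑ k ∈ range n, e k) / n := by
        rw [sum_add_distrib, ← sum_div]
        linarith [sum_log_div_le n]

lemma prod_one_add_excess_div_le {s : ℕ → ℝ} (hs : Antitone s) (n : ℕ) :
    ∏ k ∈ range (n + 1), (1 + excess s k / (k + 1))
      ≤ 4 ^ (n + 1) * exp (∑ k ∈ range (n + 1), (s (k / 2) - s k)) := by
  have hpos : ∀ k, 0 < 1 + excess s k / (k + 1) := fun k => by
    have := excess_nonneg hs k; positivity
  have hlog4 : 1 ≤ log 4 := by
    rw [le_log_iff_exp_le (by norm_num)]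
    linarith [exp_one_lt_d9]
  have hbound := sum_log_one_add_div_le (excess_nonneg hs) (n + 1)
  have hexcess : (∑ k ∈ range (n + 1), excess s k) / (n + 1 : ℕ) ≤
      ∑ k ∈ range (n + 1), (s (k / 2) - s k) := by
    rw [div_le_iff₀ (by positivity), mul_comm]
    exact_mod_cast sum_excess_le hs n
  rw [← exp_log (prod_pos fun k _ => hpos k), log_prod fun k _ => (hpos k).ne',
    ← exp_log (show (0 : ℝ) < 4 by norm_num), ← exp_nat_mul, ← exp_add, exp_le_exp]
  push_cast at hbound hexcess ⊢
  have := mul_le_mul_of_nonneg_left hlog4 (show (0 : ℝ) ≤ n + 1 by positivity)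
  linarith

lemma opS_eq_mul_one_add_excess {x : ℕ → ℝ} (hpos : ∀ m, 0 < x m) (k : ℕ) :
    opS x k = x k * (1 + excess (fun m => log (x m)) k / (k + 1)) := by
  have hratio : (∏ m ∈ range (k + 1), x m) / x k ^ (k + 1) = ∏ m ∈ range (k + 1), (x m / x k) := by
    rw [prod_div_distrib, prod_const, card_range]
  rw [opS, if_neg (hpos k).ne', hratio, log_prod fun m _ => (div_pos (hpos m) (hpos k)).ne',
    excess, one_div_mul_eq_div]
  simp only [log_div (hpos _).ne' (hpos k).ne']

/-- For a positive nonincreasing sequence `x`, `Sx ≺≺_log 4(x ⊕ x)`: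
for every `n`, `∏_{k=0}^n (Sx)(k) ≤ 4^(n+1) ∏_{k=0}^n x(⌊k/2⌋)`. -/
theorem stmt_4 (x : ℕ → ℝ) (hpos : ∀ m, 0 < x m) (hmono : Antitone x) :
    ∀ n : ℕ, ∏ k ∈ Finset.range (n + 1), opS x k ≤
      (4 : ℝ) ^ (n + 1) * ∏ k ∈ Finset.range (n + 1), x (k / 2) := by
  intro n
  have hlog : Antitone fun m => log (x m) := fun i j hij => log_le_log (hpos j) (hmono hij)
  have hexp : exp (∑ k ∈ range (n + 1), (log (x (k / 2)) - log (x k)))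
      = (∏ k ∈ range (n + 1), x (k / 2)) / ∏ k ∈ range (n + 1), x k := by
    rw [exp_sum, ← prod_div_distrib]
    exact prod_congr rfl fun k _ => by rw [exp_sub, exp_log (hpos _), exp_log (hpos _)]
  have hprod_pos : 0 < ∏ k ∈ range (n + 1), x k := prod_pos fun k _ => hpos k
  calc ∏ k ∈ range (n + 1), opS x k
      = (∏ k ∈ range (n + 1), x k)
          * ∏ k ∈ range (n + 1), (1 + excess (fun m => log (x m)) k / (k + 1)) := by
        rw [← prod_mul_distrib]
        exact prod_congr rfl fun k _ => opS_eq_mul_one_add_excess hpos k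
    _ ≤ (∏ k ∈ range (n + 1), x k)
          * (4 ^ (n + 1) * exp (∑ k ∈ range (n + 1), (log (x (k / 2)) - log (x k)))) :=
        mul_le_mul_of_nonneg_left (prod_one_add_excess_div_le hlog n) hprod_pos.le
    _ = 4 ^ (n + 1) * ∏ k ∈ range (n + 1), x (k / 2) := by
        rw [hexp]
        field_simp
end

section
/- Let a, b, c, d : ℕ → ℝ be nonnegative nonincreasing sequences with b ≺≺_log a and d ≺≺_log c. Then the decreasing rearrangement of the disjoint sum b ⊕ d is logarithmically submajorized by that of a ⊕ c, i.e., for every n, ∏_{k=0}^n μ(k, b⊕d) ≤ ∏_{k=0}^n μ(k, a⊕c), where μ(·, b⊕d) denotes the decreasing rearrangement of the concatenated multiset of values of b and d. -/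
/-!
Transport both disjoint sums to `ℕ ⊕ ℕ`. The first `n + 1` terms of `μ(b ⊕ d)` consist of
`n₁` values of `b` and `n₂` values of `d` with `n₁ + n₂ = n + 1`, and since `b` and `d` are
nonincreasing their product is at most `∏_{k<n₁} b k * ∏_{k<n₂} d k`, which is at most
`∏_{k<n₁} a k * ∏_{k<n₂} c k` by the hypotheses. Those `n + 1` values of `a` and `c` are
`n + 1` distinct terms of `μ(a ⊕ c)`, whose product is at most that of the `n + 1` largest.
-/

/-- The interleaving (disjoint sum) of two sequences: `(y ⊕ z)(2j) = y(j)`,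
`(y ⊕ z)(2j+1) = z(j)`. -/
def dSum (y z : ℕ → ℝ) (k : ℕ) : ℝ := if Even k then y (k / 2) else z (k / 2)

open Finset

theorem dSum_eq_sumElim (y z : ℕ → ℝ) (i : ℕ) :
    dSum y z i = Sum.elim y z (Equiv.natSumNatEquivNat.symm i) := by
  obtain ⟨s, rfl⟩ := Equiv.natSumNatEquivNat.surjective i
  rcases s with j | j <;>
    simp [dSum, Equiv.natSumNatEquivNat_apply, Nat.mul_add_div]

section

variable {R : Type*} [CommSemiring R] [PartialOrder R] [IsOrderedRing R]

theorem Finset.prod_le_prod_range_card_of_antitone {f : ℕ → R} (hf0 : ∀ k, 0 ≤ f k)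
    (hf : Antitone f) (s : Finset ℕ) : ∏ i ∈ s, f i ≤ ∏ k ∈ range #s, f k := by
  induction s using Finset.induction_on_max with
  | empty => simp
  | insert m s hlt ih =>
    have hm : m ∉ s := fun h => lt_irrefl m (hlt m h)
    have hcard : #s ≤ m := by
      simpa using card_le_card fun i hi => mem_range.2 (hlt i hi)
    rw [prod_insert hm, card_insert_of_notMem hm, prod_range_succ, mul_comm]
    exact mul_le_mul ih (hf hcard) (hf0 m) (prod_nonneg fun k _ => hf0 k)

theorem prod_sumElim_le_prod_range_mul_prod_range {y z : ℕ → R}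
    (hy0 : ∀ k, 0 ≤ y k) (hz0 : ∀ k, 0 ≤ z k) (hy : Antitone y) (hz : Antitone z)
    (u : Finset (ℕ ⊕ ℕ)) :
    ∏ s ∈ u, Sum.elim y z s ≤ (∏ k ∈ range #u.toLeft, y k) * ∏ k ∈ range #u.toRight, z k := by
  conv_lhs => rw [← toLeft_disjSum_toRight (u := u), prod_disjSum]
  exact mul_le_mul (prod_le_prod_range_card_of_antitone hy0 hy _)
    (prod_le_prod_range_card_of_antitone hz0 hz _) (prod_nonneg fun k _ => hz0 k)
    (prod_nonneg fun k _ => hy0 k)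

theorem prod_range_mul_prod_range_le_of_antitone_rearrangement {y z μ : ℕ → R}
    (hy0 : ∀ k, 0 ≤ y k) (hz0 : ∀ k, 0 ≤ z k) (σ : ℕ ≃ ℕ ⊕ ℕ)
    (hμ : ∀ k, μ k = Sum.elim y z (σ k)) (hμ_anti : Antitone μ) (n₁ n₂ : ℕ) :
    (∏ k ∈ range n₁, y k) * ∏ k ∈ range n₂, z k ≤ ∏ k ∈ range (n₁ + n₂), μ k := by
  have hμ0 (k : ℕ) : 0 ≤ μ k := by
    rw [hμ]
    rcases σ k with j | j
    exacts [hy0 j, hz0 j]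
  calc (∏ k ∈ range n₁, y k) * ∏ k ∈ range n₂, z k
      = ∏ k ∈ ((range n₁).disjSum (range n₂)).map σ.symm.toEmbedding, μ k := by
        simp [prod_map, prod_disjSum, hμ]
    _ ≤ ∏ k ∈ range (n₁ + n₂), μ k := by
      simpa only [card_map, card_disjSum, card_range] using
        prod_le_prod_range_card_of_antitone hμ0 hμ_anti
          (((range n₁).disjSum (range n₂)).map σ.symm.toEmbedding)

end

theorem stmt_5_general (a b c d : ℕ → ℝ)
    (ha0 : ∀ k, 0 ≤ a k) (hb0 : ∀ k, 0 ≤ b k) (hc0 : ∀ k, 0 ≤ c k) (hd0 : ∀ k, 0 ≤ d k)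
    (hb : Antitone b) (hd : Antitone d)
    (hba : ∀ n, ∏ k ∈ Finset.range (n + 1), b k ≤ ∏ k ∈ Finset.range (n + 1), a k)
    (hdc : ∀ n, ∏ k ∈ Finset.range (n + 1), d k ≤ ∏ k ∈ Finset.range (n + 1), c k)
    (μbd μac : ℕ → ℝ) (e₁ e₂ : ℕ ≃ ℕ)
    (hμbd : ∀ k, μbd k = dSum b d (e₁ k))
    (hμac : ∀ k, μac k = dSum a c (e₂ k)) (hμac' : Antitone μac) :
    ∀ n, ∏ k ∈ Finset.range (n + 1), μbd k ≤ ∏ k ∈ Finset.range (n + 1), μac k := by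
  intro n
  have hba' : ∀ m, ∏ k ∈ range m, b k ≤ ∏ k ∈ range m, a k
    | 0 => by simp
    | m + 1 => hba m
  have hdc' : ∀ m, ∏ k ∈ range m, d k ≤ ∏ k ∈ range m, c k
    | 0 => by simp
    | m + 1 => hdc m
  set σ₁ := e₁.trans Equiv.natSumNatEquivNat.symm
  set u := (range (n + 1)).map σ₁.toEmbedding
  have hcard : #u.toLeft + #u.toRight = n + 1 := by simp [u, card_toLeft_add_card_toRight]
  calc ∏ k ∈ range (n + 1), μbd k = ∏ s ∈ u, Sum.elim b d s := by
        simp [u, σ₁, prod_map, hμbd, dSum_eq_sumElim]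
    _ ≤ (∏ k ∈ range #u.toLeft, b k) * ∏ k ∈ range #u.toRight, d k :=
        prod_sumElim_le_prod_range_mul_prod_range hb0 hd0 hb hd u
    _ ≤ (∏ k ∈ range #u.toLeft, a k) * ∏ k ∈ range #u.toRight, c k :=
        mul_le_mul (hba' _) (hdc' _) (prod_nonneg fun k _ => hd0 k) (prod_nonneg fun k _ => ha0 k)
    _ ≤ ∏ k ∈ range (n + 1), μac k := hcard ▸
        prod_range_mul_prod_range_le_of_antitone_rearrangement ha0 hc0
          (e₂.trans Equiv.natSumNatEquivNat.symm)
          (fun k => (hμac k).trans (dSum_eq_sumElim a c _)) hμac' _ _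

/-- If `b ≺≺_log a` and `d ≺≺_log c` (all sequences nonnegative and nonincreasing),
then the decreasing rearrangement `μ(b ⊕ d)` of the disjoint sum `b ⊕ d` is
logarithmically submajorized by `μ(a ⊕ c)`. Here a decreasing rearrangement of a
sequence is encoded as an antitone sequence obtained from it by a bijection of `ℕ`. -/
theorem stmt_5 (a b c d : ℕ → ℝ)
    (ha0 : ∀ k, 0 ≤ a k) (hb0 : ∀ k, 0 ≤ b k) (hc0 : ∀ k, 0 ≤ c k) (hd0 : ∀ k, 0 ≤ d k)
    (ha : Antitone a) (hb : Antitone b) (hc : Antitone c) (hd : Antitone d)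
    (hba : ∀ n, ∏ k ∈ Finset.range (n + 1), b k ≤ ∏ k ∈ Finset.range (n + 1), a k)
    (hdc : ∀ n, ∏ k ∈ Finset.range (n + 1), d k ≤ ∏ k ∈ Finset.range (n + 1), c k)
    (μbd μac : ℕ → ℝ) (e₁ e₂ : ℕ ≃ ℕ)
    (hμbd : ∀ k, μbd k = dSum b d (e₁ k)) (hμbd' : Antitone μbd)
    (hμac : ∀ k, μac k = dSum a c (e₂ k)) (hμac' : Antitone μac) :
    ∀ n, ∏ k ∈ Finset.range (n + 1), μbd k ≤ ∏ k ∈ Finset.range (n + 1), μac k :=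
  stmt_5_general a b c d ha0 hb0 hc0 hd0 hb hd hba hdc μbd μac e₁ e₂ hμbd hμac hμac'
end

section
/- Let x : ℕ → ℝ be a nonnegative nonincreasing sequence, N a positive integer, and define the dilation (σ_N x)(k) = x(⌊k/N⌋) and the geometric-mean transform (Tz)(k) = (∏_{m=0}^k z(m))^(1/(k+1)). Then σ_N(Tx) ≤ T(σ_N x) ≤ σ_{2N}(Tx) pointwise. -/
/-- The geometric-mean transform `(Tx)(k) = (∏_{m=0}^k x(m))^(1/(k+1))`. -/
noncomputable def opT (x : ℕ → ℝ) (k : ℕ) : ℝ :=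
  (∏ m ∈ Finset.range (k + 1), x m) ^ (1 / ((k : ℝ) + 1))

/-- The dilation `(σ_N x)(k) = x(⌊k/N⌋)`. -/
def dil (N : ℕ) (x : ℕ → ℝ) (k : ℕ) : ℝ := x (k / N)

/-!
`opT y k` is the geometric mean of the first `k + 1` terms of `y`; for a nonincreasing
nonnegative `y` these means are nonincreasing in `k`. Over a full block of `(a + 1) * N` terms,
the mean of `σ_N x` equals the mean of the first `a + 1` terms of `x`. Writing `k = q N + r`
with `r < N`, the index `k` lies between the ends of the blocks `q N - 1` and `(q + 1) N - 1`,
so monotonicity of the means of `σ_N x` squeezes `T(σ_N x)(k)` between `Tx(q) = σ_N(Tx)(k)`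
and `Tx(q - 1)`, which is at most `Tx(⌊q / 2⌋) = σ_{2N}(Tx)(k)` when `q ≥ 1`; for `q = 0`
all the means involved equal `x 0`.
-/

lemma Antitone.dil {x : ℕ → ℝ} (hx : Antitone x) (N : ℕ) : Antitone (dil N x) :=
  fun _ _ h => hx (Nat.div_le_div_right h)

lemma prod_range_mul_dil (x : ℕ → ℝ) {N : ℕ} (hN : 0 < N) (a : ℕ) :
    ∏ m ∈ Finset.range (a * N), dil N x m = (∏ j ∈ Finset.range a, x j) ^ N := by
  induction a with
  | zero => simp
  | succ a ih =>
    have hblock : ∀ i ∈ Finset.range N, dil N x (a * N + i) = x a := by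
      intro i hi
      rw [dil, add_comm, mul_comm, Nat.add_mul_div_left i a hN,
        Nat.div_eq_of_lt (Finset.mem_range.mp hi), zero_add]
    rw [Nat.succ_mul, Finset.prod_range_add, ih, Finset.prod_congr rfl hblock,
      Finset.prod_range_succ, Finset.prod_const, Finset.card_range, mul_pow]

lemma opT_zero (y : ℕ → ℝ) : opT y 0 = y 0 := by
  simp [opT]

lemma opT_le_opT_of_prod_pow_le {y z : ℕ → ℝ} (hy0 : ∀ k, 0 ≤ y k) (hz0 : ∀ k, 0 ≤ z k)
    {j k : ℕ} (h : (∏ m ∈ Finset.range (j + 1), y m) ^ (k + 1) ≤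
      (∏ m ∈ Finset.range (k + 1), z m) ^ (j + 1)) :
    opT y j ≤ opT z k := by
  have hroot : ∀ (c : ℝ), 0 ≤ c → ∀ u v : ℕ,
      c ^ (1 / ((u : ℝ) + 1)) = (c ^ (v + 1)) ^ (1 / (((u : ℝ) + 1) * ((v : ℝ) + 1))) := by
    intro c hc u v
    rw [← Real.rpow_natCast c (v + 1), ← Real.rpow_mul hc]
    congr 1
    push_cast
    field_simp
  have hP : 0 ≤ ∏ m ∈ Finset.range (j + 1), y m := Finset.prod_nonneg fun m _ => hy0 m
  have hQ : 0 ≤ ∏ m ∈ Finset.range (k + 1), z m := Finset.prod_nonneg fun m _ => hz0 m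
  rw [opT, opT, hroot _ hP j k, hroot _ hQ k j, mul_comm ((k : ℝ) + 1)]
  exact Real.rpow_le_rpow (by positivity) h (by positivity)

lemma opT_succ_le {y : ℕ → ℝ} (hy0 : ∀ k, 0 ≤ y k) (hy : Antitone y) (n : ℕ) :
    opT y (n + 1) ≤ opT y n := by
  apply opT_le_opT_of_prod_pow_le hy0 hy0
  set P := ∏ m ∈ Finset.range (n + 1), y m
  have hP : 0 ≤ P := Finset.prod_nonneg fun m _ => hy0 m
  have hlast : y (n + 1) ^ (n + 1) ≤ P := by
    calc y (n + 1) ^ (n + 1) = ∏ _m ∈ Finset.range (n + 1), y (n + 1) := by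
          rw [Finset.prod_const, Finset.card_range]
      _ ≤ P := Finset.prod_le_prod (fun _ _ => hy0 _)
          fun m hm => hy (by simp at hm; omega)
  calc (∏ m ∈ Finset.range (n + 1 + 1), y m) ^ (n + 1)
        = P ^ (n + 1) * y (n + 1) ^ (n + 1) := by rw [Finset.prod_range_succ, mul_pow]
    _ ≤ P ^ (n + 1) * P := mul_le_mul_of_nonneg_left hlast (by positivity)
    _ = P ^ (n + 1 + 1) := (pow_succ P _).symm

lemma opT_antitone {y : ℕ → ℝ} (hy0 : ∀ k, 0 ≤ y k) (hy : Antitone y) : Antitone (opT y) :=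
  antitone_nat_of_succ_le (opT_succ_le hy0 hy)

lemma opT_dil_of_succ_eq {x : ℕ → ℝ} (hx0 : ∀ k, 0 ≤ x k) {N : ℕ} (hN : 0 < N) {a k : ℕ}
    (hk : k + 1 = (a + 1) * N) : opT (dil N x) k = opT x a := by
  have hk' : (k : ℝ) + 1 = ((a : ℝ) + 1) * N := by exact_mod_cast hk
  rw [opT, opT, hk, prod_range_mul_dil x hN, ← Real.rpow_natCast, ← Real.rpow_mul
    (Finset.prod_nonneg fun j _ => hx0 j)]
  congr 1
  field_simp
  linarith

/-- For a nonnegative nonincreasing sequence `x` and `N ≥ 1`,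
`σ_N(Tx) ≤ T(σ_N x) ≤ σ_{2N}(Tx)` pointwise. -/
theorem stmt_8 (x : ℕ → ℝ) (hx0 : ∀ k, 0 ≤ x k) (hx : Antitone x) (N : ℕ) (hN : 0 < N) :
    ∀ k, dil N (opT x) k ≤ opT (dil N x) k ∧ opT (dil N x) k ≤ dil (2 * N) (opT x) k := by
  intro k
  have hmono := opT_antitone (fun _ => hx0 _) (hx.dil N)
  have hblock : ∀ a, opT (dil N x) (a * N + (N - 1)) = opT x a := fun a =>
    opT_dil_of_succ_eq hx0 hN (by rw [add_one_mul]; omega)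
  constructor
  · have hk : k < k / N * N + N := Nat.lt_div_mul_add hN
    calc dil N (opT x) k = opT (dil N x) (k / N * N + (N - 1)) := (hblock (k / N)).symm
      _ ≤ opT (dil N x) k := hmono (by omega)
  · have hk2 : k / (2 * N) = k / N / 2 := by rw [mul_comm, Nat.div_div_eq_div_mul]
    rw [dil, hk2]
    cases hq : k / N with
    | zero =>
      calc opT (dil N x) k ≤ opT (dil N x) 0 := hmono (Nat.zero_le k)
        _ = opT x 0 := by rw [opT_zero, opT_zero, dil, Nat.zero_div]
    | succ p =>
      have hp : p * N + (N - 1) ≤ k := by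
        have := Nat.div_mul_le_self k N
        rw [hq, add_one_mul] at this
        omega
      calc opT (dil N x) k ≤ opT (dil N x) (p * N + (N - 1)) := hmono hp
        _ = opT x p := hblock p
        _ ≤ opT x ((p + 1) / 2) := opT_antitone hx0 hx (by omega)
end

section
/- Let x : ℕ → ℝ be a nonnegative nonincreasing sequence, N a positive integer, T the geometric-mean transform (Tz)(k) = (∏_{m=0}^k z(m))^(1/(k+1)), and σ_N the N-fold dilation (σ_N z)(k) = z(⌊k/N⌋). If Tx ≺≺_log N·σ_N x, then T²x ≤ N·σ_{2N}(Tx) pointwise. -/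
/-!
By hypothesis the partial products of `Tx` are dominated by those of `N·σ_N x`, so
`T²x ≤ T(N·σ_N x) = N·T(σ_N x)`, and it remains to see `T(σ_N x) ≤ σ_{2N}(Tx)`.
With `q = ⌊k/(2N)⌋`, raising both sides at `k` to the power `(k+1)(q+1)` turns this into a
comparison of two products of `(k+1)(q+1)` values of `x`, namely `x(⌊t/((q+1)N)⌋)` against
`x(⌊t/(k+1)⌋)`; since `(q+1)N ≤ k+1` unless `q = 0`, the first index is always the larger,
and `x` is nonincreasing.
-/

open Finset

theorem Finset.prod_range_mul_comp_div {M : Type*} [CommMonoid M] (f : ℕ → M) (a b : ℕ) :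
    ∏ t ∈ range (a * b), f (t / b) = ∏ m ∈ range a, f m ^ b := by
  induction a with
  | zero => simp
  | succ a ih =>
    rw [Nat.succ_mul, prod_range_add, ih, prod_range_succ]
    congr 1
    have hblock : ∀ i ∈ range b, f ((a * b + i) / b) = f a := fun i hi => by
      have hi : i < b := mem_range.mp hi
      rw [Nat.mul_comm, Nat.mul_add_div (by omega), Nat.div_eq_of_lt hi, Nat.add_zero]
    rw [prod_congr rfl hblock, prod_const, card_range]

theorem Nat.div_succ_le_div_of_lt_mul {k N t : ℕ} (ht : t < (k + 1) * (k / (2 * N) + 1)) :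
    t / (k + 1) ≤ t / ((k / (2 * N) + 1) * N) := by
  rcases Nat.eq_zero_or_pos (k / (2 * N)) with hq | hq
  · rw [hq, zero_add, mul_one] at ht
    rw [Nat.div_eq_of_lt ht]
    exact Nat.zero_le _
  · have hN : 0 < N := Nat.pos_of_ne_zero fun hN => by simp [hN] at hq
    apply Nat.div_le_div_left _ (by positivity)
    have := Nat.div_mul_le_self k (2 * N)
    nlinarith

section GeometricMean

variable {x y : ℕ → ℝ}

theorem dil_nonneg (hx : ∀ m, 0 ≤ x m) (N k : ℕ) : 0 ≤ dil N x k :=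
  hx _

theorem opT_nonneg (hx : ∀ m, 0 ≤ x m) (k : ℕ) : 0 ≤ opT x k :=
  Real.rpow_nonneg (prod_nonneg fun m _ => hx m) _

theorem opT_pow_succ (hx : ∀ m, 0 ≤ x m) (k : ℕ) :
    opT x k ^ (k + 1) = ∏ m ∈ range (k + 1), x m := by
  have hexp : 1 / ((k : ℝ) + 1) = ((k + 1 : ℕ) : ℝ)⁻¹ := by push_cast; ring
  rw [opT, hexp, Real.rpow_inv_natCast_pow (prod_nonneg fun m _ => hx m) k.succ_ne_zero]

theorem opT_le_opT_of_prod_le (hx : ∀ m, 0 ≤ x m) {k : ℕ}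
    (h : ∏ m ∈ range (k + 1), x m ≤ ∏ m ∈ range (k + 1), y m) : opT x k ≤ opT y k :=
  Real.rpow_le_rpow (prod_nonneg fun m _ => hx m) h (by positivity)

theorem opT_const_mul {c : ℝ} (hc : 0 ≤ c) (hx : ∀ m, 0 ≤ x m) (k : ℕ) :
    opT (fun m => c * x m) k = c * opT x k := by
  rw [← pow_left_inj₀ (opT_nonneg (fun m => mul_nonneg hc (hx m)) k)
    (mul_nonneg hc (opT_nonneg hx k)) k.succ_ne_zero, mul_pow, opT_pow_succ hx,
    opT_pow_succ (fun m => mul_nonneg hc (hx m)), prod_mul_distrib, prod_const, card_range]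

theorem opT_dil_le_dil_opT (hx0 : ∀ m, 0 ≤ x m) (hx : Antitone x) (N k : ℕ) :
    opT (dil N x) k ≤ dil (2 * N) (opT x) k := by
  set q := k / (2 * N) with hq
  have hn : (k + 1) * (q + 1) ≠ 0 := by positivity
  rw [dil, ← hq, ← pow_le_pow_iff_left₀ (opT_nonneg (dil_nonneg hx0 N) k) (opT_nonneg hx0 q) hn]
  calc opT (dil N x) k ^ ((k + 1) * (q + 1))
      = ∏ t ∈ range ((k + 1) * (q + 1)), x (t / ((q + 1) * N)) := by
        rw [pow_mul, opT_pow_succ (dil_nonneg hx0 N), ← prod_pow,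
          ← prod_range_mul_comp_div (fun m => dil N x m)]
        simp only [dil, Nat.div_div_eq_div_mul]
    _ ≤ ∏ t ∈ range ((k + 1) * (q + 1)), x (t / (k + 1)) :=
        prod_le_prod (fun _ _ => hx0 _)
          fun t ht => hx (Nat.div_succ_le_div_of_lt_mul (mem_range.mp ht))
    _ = opT x q ^ ((k + 1) * (q + 1)) := by
        rw [Nat.mul_comm, prod_range_mul_comp_div, prod_pow, pow_mul, opT_pow_succ hx0]

end GeometricMean

theorem stmt_9_general (x : ℕ → ℝ) (hx0 : ∀ k, 0 ≤ x k) (hx : Antitone x) (N : ℕ)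
    (h : ∀ n, ∏ k ∈ Finset.range (n + 1), opT x k ≤
      ∏ k ∈ Finset.range (n + 1), ((N : ℝ) * dil N x k)) :
    ∀ k, opT (opT x) k ≤ (N : ℝ) * dil (2 * N) (opT x) k := by
  intro k
  calc opT (opT x) k
      ≤ opT (fun m => (N : ℝ) * dil N x m) k := opT_le_opT_of_prod_le (opT_nonneg hx0) (h k)
    _ = N * opT (dil N x) k := opT_const_mul N.cast_nonneg (dil_nonneg hx0 N) k
    _ ≤ N * dil (2 * N) (opT x) k := by gcongr; exact opT_dil_le_dil_opT hx0 hx N k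

/-- For a nonnegative nonincreasing sequence `x` and `N ≥ 1`:
if `Tx ≺≺_log N·σ_N x`, then `T²x ≤ N·σ_{2N}(Tx)` pointwise. -/
theorem stmt_9 (x : ℕ → ℝ) (hx0 : ∀ k, 0 ≤ x k) (hx : Antitone x) (N : ℕ) (hN : 0 < N)
    (h : ∀ n, ∏ k ∈ Finset.range (n + 1), opT x k ≤
      ∏ k ∈ Finset.range (n + 1), ((N : ℝ) * dil N x k)) :
    ∀ k, opT (opT x) k ≤ (N : ℝ) * dil (2 * N) (opT x) k :=
  stmt_9_general x hx0 hx N h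
end

section
/- Define the sequence a : ℕ → ℝ by a(k) = 2^(-2^(3n)) for k ∈ [2^(2^(3(n-1))), 2^(2^(3n))) (with a(k) = 2^(-8) for k ∈ [0, 2^8) at n=1, i.e., a = sup_{n≥0} 2^(-2^(3n)) χ_{[0, 2^(2^(3n)))}). Let γ_n = 2^(3n + 2^(3n)) and (Ta)(k) = (∏_{m=0}^k a(m))^(1/(k+1)). Then for every n ≥ 1 and every k with 2^(2^(3n)) ≤ k < 2^(2^(3(n+1))), one has 2^(7γ_n/(k+1)) ≤ 2^(2^(3(n+1))) · (Ta)(k) ≤ 2^(1 + 7γ_n/(k+1)). -/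
/-- The sequence `a = sup_{n ≥ 0} 2^(-2^(3n)) χ_{[0, 2^(2^(3n)))}`. -/
noncomputable def seqA (k : ℕ) : ℝ :=
  ⨆ n : ℕ, if k < 2 ^ 2 ^ (3 * n) then ((2 : ℝ) ^ 2 ^ (3 * n))⁻¹ else 0

/-- `γ_n = 2^(3n + 2^(3n))`. -/
def gam (n : ℕ) : ℕ := 2 ^ (3 * n + 2 ^ (3 * n))

open Finset

theorem iSup_ite_lt_eq {B : ℕ → ℕ} {c : ℕ → ℝ} (hc : Antitone c) {k j : ℕ}
    (hcj : 0 ≤ c j) (h₁ : ∀ i < j, B i ≤ k) (h₂ : k < B j) :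
    ⨆ i, (if k < B i then c i else 0) = c j := by
  have hle : ∀ i, (if k < B i then c i else 0) ≤ c j := by
    intro i
    split_ifs with h
    · exact hc (not_lt.1 fun hij => (h₁ i hij).not_gt h)
    · exact hcj
  exact le_antisymm (ciSup_le hle)
    (le_ciSup_of_le ⟨c j, Set.forall_mem_range.2 hle⟩ j (by rw [if_pos h₂]))

theorem seqA_eq {j m : ℕ} (h₁ : ∀ i < j, 2 ^ 2 ^ (3 * i) ≤ m) (h₂ : m < 2 ^ 2 ^ (3 * j)) :
    seqA m = ((2 : ℝ) ^ 2 ^ (3 * j))⁻¹ :=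
  iSup_ite_lt_eq (fun _ _ h => inv_anti₀ (by positivity)
      (pow_le_pow_right₀ one_le_two (Nat.pow_le_pow_right two_pos (by omega))))
    (by positivity) h₁ h₂

theorem seqA_of_mem_block {n m : ℕ} (h₁ : 2 ^ 2 ^ (3 * n) ≤ m)
    (h₂ : m < 2 ^ 2 ^ (3 * (n + 1))) :
    seqA m = ((2 : ℝ) ^ 2 ^ (3 * (n + 1)))⁻¹ :=
  seqA_eq (fun _ _ =>
    (Nat.pow_le_pow_right two_pos (Nat.pow_le_pow_right two_pos (by omega))).trans h₁) h₂

theorem gam_eq (n : ℕ) : gam n = 2 ^ (3 * n) * 2 ^ 2 ^ (3 * n) := pow_add ..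

theorem two_pow_three_mul_succ (n : ℕ) : 2 ^ (3 * (n + 1)) = 8 * 2 ^ (3 * n) := by
  rw [mul_add, pow_add]; ring

theorem two_pow_mul_prod_seqA_of_mem_block {n N : ℕ} (h₁ : 2 ^ 2 ^ (3 * n) ≤ N)
    (h₂ : N ≤ 2 ^ 2 ^ (3 * (n + 1))) :
    (2 : ℝ) ^ (2 ^ (3 * (n + 1)) * N) * ∏ m ∈ range N, seqA m =
      (2 : ℝ) ^ (2 ^ (3 * (n + 1)) * 2 ^ 2 ^ (3 * n)) *
        ∏ m ∈ range (2 ^ 2 ^ (3 * n)), seqA m := by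
  induction N, h₁ using Nat.le_induction with
  | base => rfl
  | succ N hN ih =>
    rw [← ih (by omega), prod_range_succ, seqA_of_mem_block hN (by omega), mul_add, mul_one,
      pow_add]
    field_simp

theorem two_pow_mul_prod_seqA_block_start (n : ℕ) :
    (2 : ℝ) ^ (2 ^ (3 * (n + 1)) * 2 ^ 2 ^ (3 * n)) *
        ∏ m ∈ range (2 ^ 2 ^ (3 * n)), seqA m =
      2 ^ (7 * ∑ j ∈ range (n + 1), gam j) := by
  induction n with
  | zero =>
    have h : ∀ m < 2, seqA m = 2⁻¹ := fun m hm => by simpa using seqA_eq (j := 0) (by omega) hm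
    norm_num [prod_range_succ, h, gam]
  | succ n ih =>
    have hnext := two_pow_mul_prod_seqA_of_mem_block (n := n) (N := 2 ^ 2 ^ (3 * (n + 1)))
      (Nat.pow_le_pow_right two_pos (Nat.pow_le_pow_right two_pos (by omega))) le_rfl
    -- the jump of the exponent from `2^(3(n+1))` to `8 · 2^(3(n+1))` contributes `7 γ_{n+1}`
    have hexp : 2 ^ (3 * (n + 1 + 1)) * 2 ^ 2 ^ (3 * (n + 1)) =
        2 ^ (3 * (n + 1)) * 2 ^ 2 ^ (3 * (n + 1)) + 7 * gam (n + 1) := by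
      rw [two_pow_three_mul_succ (n + 1), gam_eq]; ring
    rw [hexp, pow_add, mul_right_comm, hnext, ih, sum_range_succ _ (n + 1), mul_add, pow_add]

theorem seven_mul_sum_gam_le (n : ℕ) : 7 * ∑ j ∈ range n, gam j ≤ 2 ^ 2 ^ (3 * n) := by
  induction n with
  | zero => simp
  | succ n ih =>
    have hexp : 3 * n + 3 + 2 ^ (3 * n) ≤ 2 ^ (3 * (n + 1)) := by
      have : n + 1 ≤ 2 ^ (3 * n) :=
        (Nat.lt_two_pow_self).trans_le (Nat.pow_le_pow_right two_pos (by omega))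
      rw [two_pow_three_mul_succ]; omega
    have hbg : 2 ^ 2 ^ (3 * n) ≤ gam n := by
      rw [gam_eq]; exact Nat.le_mul_of_pos_left _ (by positivity)
    calc 7 * ∑ j ∈ range (n + 1), gam j ≤ 8 * gam n := by rw [sum_range_succ]; omega
      _ = 2 ^ (3 * n + 3 + 2 ^ (3 * n)) := by rw [gam]; ring
      _ ≤ 2 ^ 2 ^ (3 * (n + 1)) := Nat.pow_le_pow_right two_pos hexp

theorem mul_opT_eq {x : ℕ → ℝ} (hx : ∀ m, 0 ≤ x m) {c y : ℝ} (hc : 0 ≤ c) (k : ℕ)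
    (h : c ^ (k + 1) * ∏ m ∈ range (k + 1), x m = y) :
    c * opT x k = y ^ (1 / ((k : ℝ) + 1)) := by
  rw [← h, Real.mul_rpow (by positivity) (prod_nonneg fun m _ => hx m), opT, one_div,
    ← Nat.cast_succ,
    Real.pow_rpow_inv_natCast hc k.succ_ne_zero]

theorem two_pow_mul_opT_seqA {n k : ℕ} (h₁ : 2 ^ 2 ^ (3 * n) ≤ k)
    (h₂ : k < 2 ^ 2 ^ (3 * (n + 1))) :
    (2 : ℝ) ^ 2 ^ (3 * (n + 1)) * opT seqA k =
      2 ^ (7 * (∑ j ∈ range (n + 1), gam j : ℝ) / ((k : ℝ) + 1)) := by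
  have hseqA : ∀ m, 0 ≤ seqA m := fun m => Real.iSup_nonneg fun i => by split_ifs <;> positivity
  rw [mul_opT_eq hseqA (by positivity) k (y := 2 ^ (7 * ∑ j ∈ range (n + 1), gam j)),
    ← Real.rpow_natCast, ← Real.rpow_mul zero_le_two, mul_one_div]
  · push_cast
    ring
  · rw [← pow_mul, ← two_pow_mul_prod_seqA_block_start,
      two_pow_mul_prod_seqA_of_mem_block (by omega) h₂]

/-- For every `n ≥ 1` and `2^(2^(3n)) ≤ k < 2^(2^(3(n+1)))`,
`2^(7γ_n/(k+1)) ≤ 2^(2^(3(n+1))) (Ta)(k) ≤ 2^(1 + 7γ_n/(k+1))`. -/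
theorem stmt_11 :
    ∀ n : ℕ, 1 ≤ n → ∀ k : ℕ, 2 ^ 2 ^ (3 * n) ≤ k → k < 2 ^ 2 ^ (3 * (n + 1)) →
      (2 : ℝ) ^ (7 * (gam n : ℝ) / ((k : ℝ) + 1)) ≤
          (2 : ℝ) ^ 2 ^ (3 * (n + 1)) * opT seqA k ∧
        (2 : ℝ) ^ 2 ^ (3 * (n + 1)) * opT seqA k ≤
          (2 : ℝ) ^ (1 + 7 * (gam n : ℝ) / ((k : ℝ) + 1)) := by
  intro n _ k h₁ h₂
  have hk : (0 : ℝ) < k + 1 := by positivity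
  have hS : gam n ≤ ∑ j ∈ range (n + 1), gam j :=
    single_le_sum (fun _ _ => Nat.zero_le _) (self_mem_range_succ n)
  have hS' : 7 * ∑ j ∈ range (n + 1), gam j ≤ k + 1 + 7 * gam n := by
    have := seven_mul_sum_gam_le n
    rw [sum_range_succ]; omega
  rw [two_pow_mul_opT_seqA h₁ h₂]
  constructor <;> apply Real.rpow_le_rpow_of_exponent_le one_le_two
  · gcongr
    exact_mod_cast hS
  · rw [one_add_div hk.ne', div_le_div_iff_of_pos_right hk]
    exact_mod_cast hS'
end

section
/- Let a : ℕ → ℝ be defined by a = sup_{n≥0} 2^(-2^(3n)) χ_{[0, 2^(2^(3n)))} and let b : ℕ → ℝ be nonnegative nonincreasing with ∏_{m=0}^n b(m) ≤ ∏_{m=0}^n a(m) for all n. Then for every n ≥ 1 and every k ∈ [2^(3n+2^(3n)), 2^(2^(3(n+1)))), one has b(k) ≤ 256 · a(k) = 256 · 2^(-2^(3(n+1))). -/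
open Finset

lemma seqA_term_le_one (k n : ℕ) :
    (if k < 2 ^ 2 ^ (3 * n) then ((2 : ℝ) ^ 2 ^ (3 * n))⁻¹ else 0) ≤ 1 := by
  split_ifs
  · exact inv_le_one_of_one_le₀ (one_le_pow₀ one_le_two)
  · exact zero_le_one

lemma seqA_bddAbove (k : ℕ) : BddAbove (Set.range fun n : ℕ =>
    if k < 2 ^ 2 ^ (3 * n) then ((2 : ℝ) ^ 2 ^ (3 * n))⁻¹ else 0) :=
  ⟨1, Set.forall_mem_range.2 (seqA_term_le_one k)⟩

lemma seqA_nonneg (k : ℕ) : 0 ≤ seqA k :=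
  le_trans (by split_ifs <;> positivity) (le_ciSup (seqA_bddAbove k) 0)

lemma seqA_le_one (k : ℕ) : seqA k ≤ 1 :=
  ciSup_le (seqA_term_le_one k)

lemma seqA_eq_of_mem_Ico {n k : ℕ} (hk : k ∈ Ico (2 ^ 2 ^ (3 * n)) (2 ^ 2 ^ (3 * (n + 1)))) :
    seqA k = ((2 : ℝ) ^ 2 ^ (3 * (n + 1)))⁻¹ := by
  obtain ⟨hk₁, hk₂⟩ := mem_Ico.1 hk
  refine le_antisymm (ciSup_le fun j => ?_) ?_
  · split_ifs with hj
    · have hnj : n < j := by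
        by_contra! hjn
        have : 2 ^ 2 ^ (3 * j) ≤ 2 ^ 2 ^ (3 * n) :=
          Nat.pow_le_pow_right two_pos (Nat.pow_le_pow_right two_pos (by omega))
        omega
      exact inv_anti₀ (by positivity)
        (pow_le_pow_right₀ one_le_two (Nat.pow_le_pow_right two_pos (by omega)))
    · positivity
  · exact (if_pos hk₂).symm.trans_le (le_ciSup (seqA_bddAbove k) (n + 1))

lemma prod_range_seqA_le {n k : ℕ}
    (hk : k ∈ Ico (2 ^ 2 ^ (3 * n)) (2 ^ 2 ^ (3 * (n + 1)))) :
    ∏ m ∈ range (k + 1), seqA m ≤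
      ((2 : ℝ) ^ 2 ^ (3 * (n + 1)))⁻¹ ^ (k + 1 - 2 ^ 2 ^ (3 * n)) := by
  have hsub : Ico (2 ^ 2 ^ (3 * n)) (k + 1) ⊆ range (k + 1) := by
    intro m hm
    simp only [mem_Ico, mem_range] at hm ⊢
    omega
  have htail : ∀ m ∈ Ico (2 ^ 2 ^ (3 * n)) (k + 1),
      seqA m = ((2 : ℝ) ^ 2 ^ (3 * (n + 1)))⁻¹ := by
    intro m hm
    simp only [mem_Ico] at hk hm
    exact seqA_eq_of_mem_Ico (mem_Ico.2 ⟨hm.1, by omega⟩)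
  calc ∏ m ∈ range (k + 1), seqA m ≤ ∏ m ∈ Ico (2 ^ 2 ^ (3 * n)) (k + 1), seqA m :=
        prod_anti_set_of_le_one seqA_nonneg seqA_le_one hsub
    _ = _ := by rw [prod_congr rfl htail, prod_const, Nat.card_Ico]

lemma Antitone.pow_succ_le_prod_range {R : Type*} [CommSemiring R] [PartialOrder R]
    [IsOrderedRing R] {b : ℕ → R} (hb : Antitone b) {k : ℕ} (hbk : 0 ≤ b k) :
    b k ^ (k + 1) ≤ ∏ m ∈ range (k + 1), b m := by
  calc b k ^ (k + 1) = ∏ _m ∈ range (k + 1), b k := by rw [prod_const, card_range]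
    _ ≤ ∏ m ∈ range (k + 1), b m :=
      prod_le_prod (fun _ _ => hbk) fun _ hm => hb (Nat.lt_succ_iff.1 (mem_range.1 hm))

lemma le_mul_inv_of_pow_le_inv_pow {K : Type*} [Field K] [LinearOrder K] [IsStrictOrderedRing K]
    {x y c : K} {T N : ℕ} (hx : 0 < x) (hc : 0 ≤ c) (hN : N ≠ 0) (hTN : T ≤ N)
    (hxc : x ^ T ≤ c ^ N) (hy : y ^ N ≤ x⁻¹ ^ (N - T)) : y ≤ c * x⁻¹ := by
  refine le_of_pow_le_pow_left₀ hN (by positivity) ?_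
  calc y ^ N ≤ x⁻¹ ^ (N - T) := hy
    _ = x ^ T * x⁻¹ ^ N := by
      rw [← Nat.add_sub_cancel' hTN, pow_add, ← mul_assoc, ← mul_pow, mul_inv_cancel₀ hx.ne',
        one_pow, one_mul, Nat.add_sub_cancel_left]
    _ ≤ c ^ N * x⁻¹ ^ N := by gcongr
    _ = (c * x⁻¹) ^ N := (mul_pow _ _ _).symm

lemma two_pow_mul_two_pow_le {n k : ℕ} (hk : 2 ^ (3 * n + 2 ^ (3 * n)) ≤ k) :
    2 ^ (3 * (n + 1)) * 2 ^ 2 ^ (3 * n) ≤ 8 * (k + 1) := by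
  have : 2 ^ (3 * (n + 1)) * 2 ^ 2 ^ (3 * n) = 8 * 2 ^ (3 * n + 2 ^ (3 * n)) := by
    rw [← pow_add, show 3 * (n + 1) + 2 ^ (3 * n) = 3 + (3 * n + 2 ^ (3 * n)) by ring, pow_add]
    norm_num
  omega

/-- Let `b` be nonnegative and nonincreasing with `∏_{m=0}^n b(m) ≤ ∏_{m=0}^n a(m)` for all `n`.
Then for every `n ≥ 1` and every `k ∈ [2^(3n + 2^(3n)), 2^(2^(3(n+1))))`, one has
`b(k) ≤ 256 a(k) = 256 · 2^(-2^(3(n+1)))`. -/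
theorem stmt_15 (b : ℕ → ℝ) (hb0 : ∀ k, 0 ≤ b k) (hb : Antitone b)
    (hlog : ∀ n, ∏ m ∈ Finset.range (n + 1), b m ≤ ∏ m ∈ Finset.range (n + 1), seqA m) :
    ∀ n : ℕ, 1 ≤ n → ∀ k : ℕ,
      2 ^ (3 * n + 2 ^ (3 * n)) ≤ k → k < 2 ^ 2 ^ (3 * (n + 1)) →
        b k ≤ 256 * seqA k ∧ seqA k = ((2 : ℝ) ^ 2 ^ (3 * (n + 1)))⁻¹ := by
  intro n _ k hk₁ hk₂
  have hk : k ∈ Ico (2 ^ 2 ^ (3 * n)) (2 ^ 2 ^ (3 * (n + 1))) :=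
    mem_Ico.2 ⟨le_trans (Nat.pow_le_pow_right two_pos (Nat.le_add_left _ _)) hk₁, hk₂⟩
  have hseqA := seqA_eq_of_mem_Ico hk
  refine ⟨?_, hseqA⟩
  have hpow : ((2 : ℝ) ^ 2 ^ (3 * (n + 1))) ^ 2 ^ 2 ^ (3 * n) ≤ 256 ^ (k + 1) := by
    rw [← pow_mul, show (256 : ℝ) = 2 ^ 8 by norm_num, ← pow_mul]
    exact pow_le_pow_right₀ one_le_two (two_pow_mul_two_pow_le hk₁)
  rw [hseqA]
  exact le_mul_inv_of_pow_le_inv_pow (by positivity) (by norm_num) k.succ_ne_zero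
    ((mem_Ico.1 hk).1.trans k.le_succ) hpow
    (((hb.pow_succ_le_prod_range (hb0 k)).trans (hlog k)).trans (prod_range_seqA_le hk))
end
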